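/- arXiv:1511.03200 — 5 statements merged into one kernel-verified Lean document; each statement's English description precedes it below -/
import Mathlib

section
/- There exists a constant C > 0, depending only on the dimension 3, with the following property. Let Ξ : (Fin 3)⁴ → ℝ be a 4-tensor with the symmetries Ξ_{ijkl} = Ξ_{jikl} = Ξ_{ijlk} = Ξ_{klij}; let p⁰, σ_N ∈ ℝ; let τ⁰ be a real symmetric 3×3 matrix with |σ_N| ≤ ‖τ⁰‖_F (Frobenius norm); and suppose there is c > 0 such that for every complex 3×3 matrix η one has c · Σ_{i,j} |η_{ij} + η_{ji}|² ≤ Re Σ_{i,j,k,l} (Ξ_{ijkl} − p⁰ δ_{ik} δ_{jl}) η_{kl} conj(η_{ij}). Define T⁰_{ik} = −p⁰ δ_{ik} + τ⁰_{ik} and π_{ijkl} = Ξ_{ijkl} + T⁰_{ik} δ_{jl} + σ_N (δ_{ik} δ_{jl} − δ_{ij} δ_{kl}). Then for every complex 3×3 matrix η: Re Σ_{i,j,k,l} π_{ijkl} η_{kl} conj(η_{ij}) ≥ c · Σ_{i,j} |η_{ij} + η_{ji}|² − C ‖τ⁰‖_F · Σ_{i,j} |η_{ij}|². -/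
/-!
The modified stiffness π is the stability tensor Ξ − p⁰δδ plus the prestress tensor
τ⁰_{ik}δ_{jl} + σ_N(δ_{ik}δ_{jl} − δ_{ij}δ_{kl}), whose entries are bounded by
|τ⁰_{ik}| + |σ_N| ≤ 2‖τ⁰‖_F. A real 4-tensor with entries bounded by M gives a sesquilinear form
bounded by M n² Σ|η_{ij}|² (AM–GM on each term), so in dimension 3 one can take C = 18.
-/

open scoped BigOperators

/-- The Frobenius norm of a real 3×3 matrix. -/
noncomputable def frobNorm (A : Matrix (Fin 3) (Fin 3) ℝ) : ℝ :=
  Real.sqrt (∑ i, ∑ j, (A i j) ^ 2)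

section TensorForm

variable {ι : Type*} [Fintype ι]

def tensorForm (A : ι → ι → ι → ι → ℝ) (η : Matrix ι ι ℂ) : ℝ :=
  (∑ i, ∑ j, ∑ k, ∑ l, (A i j k l : ℂ) * η k l * starRingEnd ℂ (η i j)).re

lemma tensorForm_add (A B : ι → ι → ι → ι → ℝ) (η : Matrix ι ι ℂ) :
    tensorForm (fun i j k l => A i j k l + B i j k l) η = tensorForm A η + tensorForm B η := by
  simp only [tensorForm, ← Complex.add_re, ← Finset.sum_add_distrib, Complex.ofReal_add, add_mul]

lemma abs_tensorForm_le {A : ι → ι → ι → ι → ℝ} {M : ℝ} (hA : ∀ i j k l, |A i j k l| ≤ M)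
    (η : Matrix ι ι ℂ) :
    |tensorForm A η| ≤ M * Fintype.card ι ^ 2 * ∑ i, ∑ j, ‖η i j‖ ^ 2 := by
  have hterm : ∀ i j k l, ‖(A i j k l : ℂ) * η k l * starRingEnd ℂ (η i j)‖ ≤
      M / 2 * (‖η k l‖ ^ 2 + ‖η i j‖ ^ 2) := by
    intro i j k l
    rw [norm_mul, norm_mul, Complex.norm_conj, Complex.norm_real, Real.norm_eq_abs, mul_assoc]
    have hM : 0 ≤ M := (abs_nonneg _).trans (hA i j k l)
    calc |A i j k l| * (‖η k l‖ * ‖η i j‖)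
        ≤ M * ((‖η k l‖ ^ 2 + ‖η i j‖ ^ 2) / 2) := by
          gcongr
          · exact hA i j k l
          · nlinarith [two_mul_le_add_sq ‖η k l‖ ‖η i j‖]
      _ = M / 2 * (‖η k l‖ ^ 2 + ‖η i j‖ ^ 2) := by ring
  calc |tensorForm A η|
      ≤ ‖∑ i, ∑ j, ∑ k, ∑ l, (A i j k l : ℂ) * η k l * starRingEnd ℂ (η i j)‖ :=
        Complex.abs_re_le_norm _
    _ ≤ ∑ i, ∑ j, ∑ k, ∑ l, M / 2 * (‖η k l‖ ^ 2 + ‖η i j‖ ^ 2) := by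
        refine (norm_sum_le _ _).trans (Finset.sum_le_sum fun i _ => ?_)
        refine (norm_sum_le _ _).trans (Finset.sum_le_sum fun j _ => ?_)
        refine (norm_sum_le _ _).trans (Finset.sum_le_sum fun k _ => ?_)
        exact (norm_sum_le _ _).trans (Finset.sum_le_sum fun l _ => hterm i j k l)
    _ = M * Fintype.card ι ^ 2 * ∑ i, ∑ j, ‖η i j‖ ^ 2 := by
        simp only [← Finset.mul_sum, Finset.sum_add_distrib, Finset.sum_const, Finset.card_univ,
          nsmul_eq_mul]
        ring

end TensorForm

lemma abs_le_frobNorm (A : Matrix (Fin 3) (Fin 3) ℝ) (i j : Fin 3) : |A i j| ≤ frobNorm A := by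
  rw [← Real.sqrt_sq_eq_abs]
  refine Real.sqrt_le_sqrt ?_
  calc A i j ^ 2 ≤ ∑ j', A i j' ^ 2 :=
        Finset.single_le_sum (f := fun j' => A i j' ^ 2) (fun _ _ => sq_nonneg _) (Finset.mem_univ j)
    _ ≤ ∑ i', ∑ j', A i' j' ^ 2 :=
        Finset.single_le_sum (f := fun i' => ∑ j', A i' j' ^ 2)
          (fun _ _ => Finset.sum_nonneg fun _ _ => sq_nonneg _) (Finset.mem_univ i)

section PrestressTensor

variable {ι : Type*} [DecidableEq ι]

def prestressTensor (τ : Matrix ι ι ℝ) (σ : ℝ) :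
    ι → ι → ι → ι → ℝ := fun i j k l =>
  τ i k * (if j = l then 1 else 0)
    + σ * ((if i = k then 1 else 0) * (if j = l then 1 else 0)
      - (if i = j then 1 else 0) * (if k = l then 1 else 0))

lemma abs_prestressTensor_le (τ : Matrix ι ι ℝ) (σ : ℝ) (i j k l : ι) :
    |prestressTensor τ σ i j k l| ≤ |τ i k| + |σ| := by
  refine (abs_add_le _ _).trans (add_le_add ?_ ?_) <;> split_ifs <;> simp

end PrestressTensor

theorem garding_pointwise_bound :
    ∃ C : ℝ, 0 < C ∧
      ∀ (Ξ : Fin 3 → Fin 3 → Fin 3 → Fin 3 → ℝ),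
        (∀ i j k l, Ξ i j k l = Ξ j i k l) →
        (∀ i j k l, Ξ i j k l = Ξ i j l k) →
        (∀ i j k l, Ξ i j k l = Ξ k l i j) →
        ∀ (p0 σN : ℝ) (τ0 : Matrix (Fin 3) (Fin 3) ℝ), τ0.IsSymm →
          |σN| ≤ frobNorm τ0 →
          ∀ c : ℝ, 0 < c →
            (∀ η : Matrix (Fin 3) (Fin 3) ℂ,
              c * ∑ i, ∑ j, (‖η i j + η j i‖) ^ 2 ≤
                (∑ i, ∑ j, ∑ k, ∑ l,
                  ((Ξ i j k l
                      - p0 * (if i = k then 1 else 0) * (if j = l then 1 else 0) : ℝ) : ℂ)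
                    * η k l * (starRingEnd ℂ) (η i j)).re) →
            ∀ η : Matrix (Fin 3) (Fin 3) ℂ,
              c * ∑ i, ∑ j, (‖η i j + η j i‖) ^ 2
                  - C * frobNorm τ0 * ∑ i, ∑ j, (‖η i j‖) ^ 2 ≤
                (∑ i, ∑ j, ∑ k, ∑ l,
                  ((Ξ i j k l
                      + (-p0 * (if i = k then 1 else 0) + τ0 i k) * (if j = l then 1 else 0)
                      + σN * ((if i = k then 1 else 0) * (if j = l then 1 else 0)
                          - (if i = j then 1 else 0) * (if k = l then 1 else 0)) : ℝ) : ℂ)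
                    * η k l * (starRingEnd ℂ) (η i j)).re := by
  refine ⟨18, by norm_num, fun Ξ _ _ _ p0 σN τ0 _ hσ c _ hstab η => ?_⟩
  set A : Fin 3 → Fin 3 → Fin 3 → Fin 3 → ℝ := fun i j k l =>
    Ξ i j k l - p0 * (if i = k then 1 else 0) * (if j = l then 1 else 0)
  have hstabη : c * ∑ i, ∑ j, ‖η i j + η j i‖ ^ 2 ≤ tensorForm A η := hstab η
  have hprestress := abs_tensorForm_le (M := 2 * frobNorm τ0) (fun i j k l =>
    (abs_prestressTensor_le τ0 σN i j k l).trans (by linarith [abs_le_frobNorm τ0 i k])) η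
  simp only [Fintype.card_fin, Nat.cast_ofNat] at hprestress
  calc _ ≤ tensorForm A η + tensorForm (prestressTensor τ0 σN) η := by
        linarith [neg_abs_le (tensorForm (prestressTensor τ0 σN) η)]
    _ = tensorForm (fun i j k l => A i j k l + prestressTensor τ0 σN i j k l) η :=
        (tensorForm_add _ _ η).symm
    _ = _ := by
        unfold tensorForm
        congr 1
        refine Finset.sum_congr rfl fun i _ => Finset.sum_congr rfl fun j _ =>
          Finset.sum_congr rfl fun k _ => Finset.sum_congr rfl fun l _ => ?_
        simp only [A, prestressTensor]
        push_cast
        ring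
end

section
/- Let E and H be complex Hilbert spaces and i : E → H an injective continuous linear map with dense range. Let a : E × E → ℂ be a bounded sesquilinear form that is Hermitian (a(u,v) = conj(a(v,u)) for all u, v ∈ E) and coercive on E relative to H: there exist α > 0 and β ≥ 0 such that a(u,u) + β‖i u‖²_H ≥ α‖u‖²_E for all u ∈ E. Define D = { u ∈ E : there exists w ∈ H such that a(u,v) + β⟪i u, i v⟫_H = ⟪w, i v⟫_H for all v ∈ E }. Then the image i(D) is dense in H. -/
open scoped ComplexInnerProductSpace

/-! The shifted form `b = a + β ⟪i ·, i ·⟫` is coercive on `E`, so by the Lax–Milgram argument the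
operator `T` with `⟪T u, v⟫ = b u v` is onto, and the domain is `T⁻¹ (range i†)`. If `y ⊥ i D`, pick
`u` with `T u = i† y`: then `u ∈ D`, so `b u u = ⟪y, i u⟫ = 0`, which forces `u = 0`, hence
`i† y = 0`, i.e. `y ⊥ range i`, and `y = 0` by density. -/

open RCLike InnerProductSpace

section

variable {𝕜 E H : Type*} [RCLike 𝕜]
  [NormedAddCommGroup E] [InnerProductSpace 𝕜 E] [NormedAddCommGroup H] [InnerProductSpace 𝕜 H]

local notation "⟪" x ", " y "⟫" => inner 𝕜 x y

def IsReCoercive (b : E →L⋆[𝕜] E →L[𝕜] 𝕜) : Prop :=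
  ∃ α > 0, ∀ u, α * ‖u‖ ^ 2 ≤ re (b u u)

noncomputable def formDomain [CompleteSpace E] [CompleteSpace H] (b : E →L⋆[𝕜] E →L[𝕜] 𝕜)
    (i : E →L[𝕜] H) : Submodule 𝕜 E :=
  (ContinuousLinearMap.adjoint i).range.comap (continuousLinearMapOfBilin b : E →ₗ[𝕜] E)

theorem mem_formDomain_iff [CompleteSpace E] [CompleteSpace H] {b : E →L⋆[𝕜] E →L[𝕜] 𝕜}
    {i : E →L[𝕜] H} {u : E} : u ∈ formDomain b i ↔ ∃ w : H, ∀ v, b u v = ⟪w, i v⟫ := by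
  simp only [formDomain, Submodule.mem_comap, LinearMap.mem_range, ContinuousLinearMap.coe_coe]
  refine exists_congr fun w => ⟨fun h v => ?_, fun h => ext_inner_right 𝕜 fun v => ?_⟩
  · rw [← continuousLinearMapOfBilin_apply, ← h, ContinuousLinearMap.adjoint_inner_left]
  · rw [continuousLinearMapOfBilin_apply, h, ContinuousLinearMap.adjoint_inner_left]

namespace IsReCoercive

variable {b : E →L⋆[𝕜] E →L[𝕜] 𝕜}

theorem eq_zero_of_apply_self_eq_zero (hb : IsReCoercive b) {u : E} (hu : b u u = 0) : u = 0 := by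
  obtain ⟨α, hα, hcoer⟩ := hb
  have := hcoer u
  rw [hu, map_zero] at this
  exact norm_eq_zero.mp (pow_eq_zero_iff two_ne_zero |>.mp <|
    le_antisymm (nonpos_of_mul_nonpos_right this hα) (sq_nonneg _))

variable [CompleteSpace E]

theorem antilipschitz_continuousLinearMapOfBilin (hb : IsReCoercive b) :
    ∃ c, AntilipschitzWith c (continuousLinearMapOfBilin b) := by
  obtain ⟨α, hα, hcoer⟩ := hb
  refine ⟨α⁻¹.toNNReal, ContinuousLinearMap.antilipschitz_of_bound _ fun u => ?_⟩
  rw [Real.coe_toNNReal _ (by positivity), ← div_eq_inv_mul, le_div_iff₀' hα]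
  rcases (norm_nonneg u).eq_or_lt with hu | hu
  · rw [← hu, mul_zero]; exact norm_nonneg _
  refine le_of_mul_le_mul_right ?_ hu
  calc α * ‖u‖ * ‖u‖ = α * ‖u‖ ^ 2 := by ring
    _ ≤ re (b u u) := hcoer u
    _ = re ⟪continuousLinearMapOfBilin b u, u⟫ := by rw [continuousLinearMapOfBilin_apply]
    _ ≤ ‖continuousLinearMapOfBilin b u‖ * ‖u‖ := re_inner_le_norm _ _

theorem surjective_continuousLinearMapOfBilin (hb : IsReCoercive b) :
    Function.Surjective (continuousLinearMapOfBilin b) := by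
  refine ((continuousLinearMapOfBilin b).bijective_iff_dense_range_and_antilipschitz.mpr
    ⟨?_, hb.antilipschitz_continuousLinearMapOfBilin⟩).surjective
  rw [Submodule.topologicalClosure_eq_top_iff, Submodule.eq_bot_iff]
  intro v hv
  refine hb.eq_zero_of_apply_self_eq_zero ?_
  rw [← continuousLinearMapOfBilin_apply]
  exact (Submodule.mem_orthogonal _ v).mp hv _ (LinearMap.mem_range_self _ v)

theorem dense_image_formDomain [CompleteSpace H] (hb : IsReCoercive b) {i : E →L[𝕜] H}
    (hi : DenseRange i) : Dense (i '' formDomain b i) := by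
  change Dense ((formDomain b i).map (i : E →ₗ[𝕜] H) : Set H)
  rw [Submodule.dense_iff_topologicalClosure_eq_top,
    Submodule.topologicalClosure_eq_top_iff, Submodule.eq_bot_iff]
  intro y hy
  obtain ⟨u, hu⟩ := hb.surjective_continuousLinearMapOfBilin (ContinuousLinearMap.adjoint i y)
  have hu_mem : u ∈ formDomain b i := ⟨y, hu.symm⟩
  have h_orth : ⟪i u, y⟫ = 0 :=
    (Submodule.mem_orthogonal _ y).mp hy _ (Submodule.mem_map_of_mem hu_mem)
  have hu_zero : u = 0 := hb.eq_zero_of_apply_self_eq_zero <| by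
    rw [← continuousLinearMapOfBilin_apply, hu, ContinuousLinearMap.adjoint_inner_left,
      ← inner_conj_symm, h_orth, map_zero]
  have hy_ker : y ∈ (ContinuousLinearMap.adjoint i).ker := by
    rw [LinearMap.mem_ker, ContinuousLinearMap.coe_coe, ← hu, hu_zero, map_zero]
  have h_range : i.rangeᗮ = ⊥ := Submodule.topologicalClosure_eq_top_iff.mp <|
    Submodule.dense_iff_topologicalClosure_eq_top.mp hi
  rwa [← ContinuousLinearMap.orthogonal_range, h_range] at hy_ker

end IsReCoercive

theorem isReCoercive_add_smul_inner_comp {a : E →L⋆[𝕜] E →L[𝕜] 𝕜} {i : E →L[𝕜] H} {α β : ℝ}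
    (hα : 0 < α) (hcoer : ∀ u, α * ‖u‖ ^ 2 ≤ re (a u u) + β * ‖i u‖ ^ 2) :
    IsReCoercive (a + (β : 𝕜) • (innerSL 𝕜).bilinearComp i i) := by
  refine ⟨α, hα, fun u => ?_⟩
  simpa only [add_apply, smul_apply, ContinuousLinearMap.bilinearComp_apply, innerSL_apply_apply,
    map_add, smul_eq_mul, re_ofReal_mul, inner_self_eq_norm_sq] using hcoer u

end

theorem domain_dense_in_H_general
    {E H : Type*}
    [NormedAddCommGroup E] [InnerProductSpace ℂ E] [CompleteSpace E]
    [NormedAddCommGroup H] [InnerProductSpace ℂ H] [CompleteSpace H]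
    (i : E →L[ℂ] H) (hdense : DenseRange i)
    (a : E →L⋆[ℂ] E →L[ℂ] ℂ)
    (α β : ℝ) (hα : 0 < α)
    (hcoer : ∀ u : E, α * ‖u‖ ^ 2 ≤ (a u u).re + β * ‖i u‖ ^ 2) :
    Dense (i '' {u : E | ∃ w : H, ∀ v : E,
      a u v + (β : ℂ) * ⟪i u, i v⟫ = ⟪w, i v⟫}) := by
  have hb := isReCoercive_add_smul_inner_comp (i := i) hα hcoer
  convert hb.dense_image_formDomain hdense using 3
  ext u
  simp [mem_formDomain_iff]

theorem domain_dense_in_H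
    {E H : Type*}
    [NormedAddCommGroup E] [InnerProductSpace ℂ E] [CompleteSpace E]
    [NormedAddCommGroup H] [InnerProductSpace ℂ H] [CompleteSpace H]
    (i : E →L[ℂ] H) (hinj : Function.Injective i) (hdense : DenseRange i)
    (a : E →L⋆[ℂ] E →L[ℂ] ℂ)
    (herm : ∀ u v : E, a u v = starRingEnd ℂ (a v u))
    (α β : ℝ) (hα : 0 < α) (hβ : 0 ≤ β)
    (hcoer : ∀ u : E, α * ‖u‖ ^ 2 ≤ (a u u).re + β * ‖i u‖ ^ 2) :
    Dense (i '' {u : E | ∃ w : H, ∀ v : E,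
      a u v + (β : ℂ) * ⟪i u, i v⟫ = ⟪w, i v⟫}) :=
  domain_dense_in_H_general i hdense a α β hα hcoer
end

section
/- Let E and H be complex Hilbert spaces, i : E → H a continuous linear map, a : E × E → ℂ a bounded Hermitian sesquilinear form (a(u,v) = conj(a(v,u))), and R : H → H a bounded linear operator with Re⟪R h, h⟫_H = 0 for all h ∈ H. Let u : ℝ → E be differentiable with derivative u' : ℝ → E, and suppose the map t ↦ i(u'(t)) from ℝ to H is differentiable with derivative u'' : ℝ → H. Assume that for every t ∈ ℝ and every v ∈ E: ⟪u''(t), i v⟫_H + ⟪2R(i(u'(t))), i v⟫_H + a(u(t), v) = 0. Then the energy t ↦ ‖i(u'(t))‖²_H + Re a(u(t), u(t)) is constant on ℝ. -/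
/-!
Differentiating, the energy has derivative `2 Re (⟪u'', i u'⟫ + a(u, u'))`, where Hermitian
symmetry merges the two terms coming from `a`. Testing the equation of motion with `v = u'(t)`
turns this into `-2 Re ⟪2 R (i u'), i u'⟫`, which vanishes because `R` is skew. A function
with zero derivative on `ℝ` is constant.
-/

open scoped ComplexInnerProductSpace

theorem HasDerivAt.complex_re {f : ℝ → ℂ} {f' : ℂ} {t : ℝ} (h : HasDerivAt f f' t) :
    HasDerivAt (fun s => (f s).re) f'.re t :=
  Complex.reCLM.hasFDerivAt.comp_hasDerivAt t h

namespace ContinuousLinearMap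

variable {E F G : Type*} [NormedAddCommGroup E] [NormedSpace ℂ E]
  [NormedAddCommGroup F] [NormedSpace ℂ F] [NormedAddCommGroup G] [NormedSpace ℂ G]

theorem isBoundedBilinearMap_of_sesquilinear (a : E →L⋆[ℂ] F →L[ℂ] G) :
    IsBoundedBilinearMap ℝ fun p : E × F => a p.1 p.2 where
  add_left x₁ x₂ y := by simp
  smul_left c x y := by
    rw [← Complex.coe_smul, map_smulₛₗ, smul_apply, Complex.conj_ofReal, Complex.coe_smul]
  add_right x := (a x).map_add
  smul_right c x := (a x).map_smul_of_tower c
  bound := ⟨max ‖a‖ 1, by positivity, fun x y =>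
    (a.le_opNorm₂ x y).trans <| by gcongr; apply le_max_left⟩

theorem hasDerivAt_of_sesquilinear (a : E →L⋆[ℂ] F →L[ℂ] G)
    {u : ℝ → E} {v : ℝ → F} {u' : E} {v' : F} {t : ℝ}
    (hu : HasDerivAt u u' t) (hv : HasDerivAt v v' t) :
    HasDerivAt (fun s => a (u s) (v s)) (a (u t) v' + a u' (v t)) t :=
  (a.isBoundedBilinearMap_of_sesquilinear.hasFDerivAt (u t, v t)).comp_hasDerivAt
    (f := fun s => (u s, v s)) t (hu.prodMk hv)

theorem hasDerivAt_re_apply_self {a : E →L⋆[ℂ] E →L[ℂ] ℂ}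
    (herm : ∀ x y : E, a x y = starRingEnd ℂ (a y x)) {u : ℝ → E} {u' : E} {t : ℝ}
    (hu : HasDerivAt u u' t) :
    HasDerivAt (fun s => (a (u s) (u s)).re) (2 * (a (u t) u').re) t := by
  convert (a.hasDerivAt_of_sesquilinear hu hu).complex_re using 1
  rw [Complex.add_re, herm u' (u t), Complex.conj_re]
  ring

end ContinuousLinearMap

theorem HasDerivAt.norm_sq_of_complex {H : Type*} [NormedAddCommGroup H] [InnerProductSpace ℂ H]
    {w : ℝ → H} {w' : H} {t : ℝ} (hw : HasDerivAt w w' t) :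
    HasDerivAt (fun s => ‖w s‖ ^ 2) (2 * (⟪w', w t⟫).re) t := by
  convert (hw.inner ℂ hw).complex_re using 1
  · ext s; simp [← inner_self_eq_norm_sq (𝕜 := ℂ) (w s)]
  · rw [Complex.add_re, ← inner_conj_symm, Complex.conj_re]; ring

theorem energy_conservation
    {E H : Type*}
    [NormedAddCommGroup E] [InnerProductSpace ℂ E]
    [NormedAddCommGroup H] [InnerProductSpace ℂ H]
    (i : E →L[ℂ] H)
    (a : E →L⋆[ℂ] E →L[ℂ] ℂ)
    (herm : ∀ u v : E, a u v = starRingEnd ℂ (a v u))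
    (R : H →L[ℂ] H) (hR : ∀ h : H, (⟪R h, h⟫).re = 0)
    (u u' : ℝ → E) (u'' : ℝ → H)
    (hu : ∀ t : ℝ, HasDerivAt u (u' t) t)
    (hu' : ∀ t : ℝ, HasDerivAt (fun s => i (u' s)) (u'' t) t)
    (heq : ∀ t : ℝ, ∀ v : E,
      ⟪u'' t, i v⟫ + ⟪((2 : ℂ) • R) (i (u' t)), i v⟫ + a (u t) v = 0) :
    ∀ t : ℝ,
      ‖i (u' t)‖ ^ 2 + (a (u t) (u t)).re
        = ‖i (u' 0)‖ ^ 2 + (a (u 0) (u 0)).re := by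
  have hpower : ∀ t, (⟪u'' t, i (u' t)⟫ + a (u t) (u' t)).re = 0 := fun t => by
    have hcoriolis : (⟪((2 : ℂ) • R) (i (u' t)), i (u' t)⟫).re = 0 := by
      simp [hR]
    have htest := congrArg Complex.re (heq t (u' t))
    simp only [Complex.add_re, Complex.zero_re] at htest ⊢
    linarith
  have hderiv : ∀ t, HasDerivAt (fun s => ‖i (u' s)‖ ^ 2 + (a (u s) (u s)).re) 0 t := fun t =>
    ((hu' t).norm_sq_of_complex.add (a.hasDerivAt_re_apply_self herm (hu t))).congr_deriv <| by
      rw [← mul_add, ← Complex.add_re, hpower, mul_zero]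
  exact fun t => is_const_of_deriv_eq_zero (fun s => (hderiv s).differentiableAt)
    (fun s => (hderiv s).deriv) t 0
end

section
/- Let X be a real Banach space, T > 0, C ≥ 0, and let k : ℝ × ℝ → (X →L X) be continuous on [0,T] × [0,T] with ‖k(t,s)‖ ≤ C (operator norm) for all 0 ≤ s ≤ t ≤ T. Then for every continuous F : [0,T] → X there exists a unique continuous g : [0,T] → X satisfying the Volterra equation g(t) = F(t) + ∫₀^t k(t,s)(g(s)) ds for all t ∈ [0,T]; moreover sup_{t ∈ [0,T]} ‖g(t)‖ ≤ e^{C T} · sup_{t ∈ [0,T]} ‖F(t)‖. -/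
/-!
The Volterra operator `Φ f (t) = F t + ∫₀ᵗ k(t,s) (f s) ds` on `C([0,T], X)` satisfies
`‖Φⁿ f₁ - Φⁿ f₂‖ ≤ (CT)ⁿ/n! ‖f₁ - f₂‖`, so some iterate of `Φ` is a contraction and `Φ` has a fixed
point, which solves the equation. Any continuous solution satisfies
`‖g t‖ ≤ M + C ∫₀ᵗ ‖g s‖ ds` with `M = sup ‖F‖`, hence `‖g t‖ ≤ M e^{Ct}` by Grönwall's inequality.
The difference of two solutions solves the equation with `F = 0`, so the same bound makes it vanish.
-/

open MeasureTheory Set Topology Function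
open scoped Nat

theorem exists_isFixedPt_of_dist_iterate_le {α : Type*} [MetricSpace α] [CompleteSpace α]
    [Nonempty α] {f : α → α} (c : ℝ)
    (hf : ∀ n x y, dist (f^[n] x) (f^[n] y) ≤ c ^ n / n ! * dist x y) :
    ∃ x, IsFixedPt f x := by
  obtain ⟨n, hn⟩ := (FloorSemiring.tendsto_pow_div_factorial_atTop |c|).eventually
    (gt_mem_nhds zero_lt_one) |>.exists
  have hK : 0 ≤ |c| ^ n / n ! := by positivity
  have hcontr : ContractingWith ⟨_, hK⟩ f^[n] := by
    refine ⟨hn, LipschitzWith.of_dist_le_mul fun x y => (hf n x y).trans ?_⟩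
    gcongr
    exact div_le_div_of_nonneg_right ((le_abs_self _).trans (abs_pow c n).le) (by positivity)
  exact ⟨_, hcontr.isFixedPt_fixedPoint_iterate⟩

theorem continuousOn_parametric_intervalIntegral_of_continuousOn {E : Type*}
    [NormedAddCommGroup E] [NormedSpace ℝ E] {f : ℝ → ℝ → E} {a b : ℝ}
    (hf : ContinuousOn (uncurry f) (Icc a b ×ˢ Icc a b)) :
    ContinuousOn (fun t => ∫ s in a..t, f t s) (Icc a b) := by
  rcases lt_or_ge b a with hba | hab
  · simp [Icc_eq_empty_of_lt hba]
  set p := projIcc a b hab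
  have hfp : Continuous (uncurry fun t s => f (p t) (p s)) :=
    hf.comp_continuous (f := fun q : ℝ × ℝ => ((p q.1 : ℝ), (p q.2 : ℝ)))
      (by fun_prop) fun q => ⟨(p q.1).2, (p q.2).2⟩
  refine (intervalIntegral.continuous_parametric_intervalIntegral_of_continuous
    (μ := volume) (a₀ := a) hfp continuous_id).continuousOn.congr fun t ht => ?_
  refine intervalIntegral.integral_congr fun s hs => ?_
  rw [uIcc_of_le ht.1] at hs
  simp only [p, projIcc_of_mem hab ht, projIcc_of_mem hab ⟨hs.1, hs.2.trans ht.2⟩]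

theorem norm_integral_clm_apply_le {E F : Type*} [NormedAddCommGroup E] [NormedSpace ℝ E]
    [NormedAddCommGroup F] [NormedSpace ℝ F] {L : ℝ → E →L[ℝ] F} {f : ℝ → E} {w : ℝ → ℝ}
    {a b C : ℝ} (hab : a ≤ b) (hC : 0 ≤ C) (hL : ∀ s ∈ Ioc a b, ‖L s‖ ≤ C)
    (hf : ∀ s ∈ Ioc a b, ‖f s‖ ≤ w s) (hw : IntervalIntegrable w volume a b) :
    ‖∫ s in a..b, L s (f s)‖ ≤ C * ∫ s in a..b, w s := by
  rw [← intervalIntegral.integral_const_mul]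
  refine intervalIntegral.norm_integral_le_of_norm_le hab (ae_of_all _ fun s hs => ?_)
    (hw.const_mul C)
  exact ((L s).le_of_opNorm_le (hL s hs) _).trans (mul_le_mul_of_nonneg_left (hf s hs) hC)

theorem le_mul_exp_of_le_add_mul_integral {u : ℝ → ℝ} {a b C M : ℝ} (hC : 0 ≤ C)
    (hu : ContinuousOn u (Icc a b))
    (hle : ∀ t ∈ Icc a b, u t ≤ M + C * ∫ s in a..t, u s) :
    ∀ t ∈ Icc a b, u t ≤ M * Real.exp (C * (t - a)) := by
  set w := fun t => ∫ s in a..t, u s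
  have hw : ContinuousOn w (Icc a b) := by
    rcases lt_or_ge b a with hba | hab
    · simp [Icc_eq_empty_of_lt hba]
    simpa [uIcc_of_le hab] using
      intervalIntegral.continuousOn_primitive_interval (hu.integrableOn_Icc.mono_set
        (uIcc_of_le hab).subset)
  have hw' : ∀ x ∈ Ico a b, HasDerivWithinAt w (u x) (Ici x) x := by
    intro x hx
    have hmem : Icc a b ∈ 𝓝[>] x := Icc_mem_nhdsGT_of_mem hx
    exact intervalIntegral.integral_hasDerivWithinAt_right
      ((hu.mono (Icc_subset_Icc_right hx.2.le)).intervalIntegrable_of_Icc hx.1)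
      ⟨_, hmem, hu.aestronglyMeasurable measurableSet_Icc⟩
      ((hu x (Ico_subset_Icc_self hx)).mono_of_mem_nhdsWithin hmem)
  have hgron : ∀ x ∈ Icc a b, w x ≤ gronwallBound 0 C M (x - a) :=
    le_gronwallBound_of_liminf_deriv_right_le hw
      (fun x hx _ hr => (hw' x hx).liminf_right_slope_le hr) (by simp [w])
      (fun x hx => by linarith [hle x (Ico_subset_Icc_self hx)])
  have hbound : ∀ x, M + C * gronwallBound 0 C M x = M * Real.exp (C * x) := by
    intro x
    rcases eq_or_ne C 0 with rfl | hC0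
    · simp
    · rw [gronwallBound_of_K_ne_0 hC0]; field_simp; ring
  intro t ht
  calc u t ≤ M + C * w t := hle t ht
    _ ≤ M + C * gronwallBound 0 C M (t - a) := by gcongr; exact hgron t ht
    _ = M * Real.exp (C * (t - a)) := hbound _

section Volterra

variable {X : Type*} [NormedAddCommGroup X] [NormedSpace ℝ X] {T C : ℝ}
  {k : ℝ → ℝ → X →L[ℝ] X} {F g : ℝ → X}

theorem continuousOn_volterraIntegral
    (hk : ContinuousOn (fun q : ℝ × ℝ => k q.1 q.2) (Icc 0 T ×ˢ Icc 0 T))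
    (hg : ContinuousOn g (Icc 0 T)) :
    ContinuousOn (fun t => ∫ s in (0:ℝ)..t, k t s (g s)) (Icc 0 T) :=
  continuousOn_parametric_intervalIntegral_of_continuousOn
    (hk.clm_apply (hg.comp continuousOn_snd fun _ hq => hq.2))

theorem intervalIntegrable_volterraIntegrand
    (hk : ContinuousOn (fun q : ℝ × ℝ => k q.1 q.2) (Icc 0 T ×ˢ Icc 0 T))
    (hg : ContinuousOn g (Icc 0 T)) {t : ℝ} (ht : t ∈ Icc 0 T) :
    IntervalIntegrable (fun s => k t s (g s)) volume 0 t := by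
  have hsub : Icc 0 t ⊆ Icc 0 T := Icc_subset_Icc_right ht.2
  refine ContinuousOn.intervalIntegrable_of_Icc ht.1 (ContinuousOn.clm_apply ?_ (hg.mono hsub))
  exact hk.comp (continuousOn_const.prodMk continuousOn_id) fun s hs => ⟨ht, hsub hs⟩

theorem norm_le_mul_exp_of_volterra (hC : 0 ≤ C)
    (hbound : ∀ s t : ℝ, 0 ≤ s → s ≤ t → t ≤ T → ‖k t s‖ ≤ C)
    {M : ℝ} (hF : ∀ t ∈ Icc 0 T, ‖F t‖ ≤ M) (hg : ContinuousOn g (Icc 0 T))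
    (hgeq : ∀ t ∈ Icc (0:ℝ) T, g t = F t + ∫ s in (0:ℝ)..t, k t s (g s)) :
    ∀ t ∈ Icc 0 T, ‖g t‖ ≤ M * Real.exp (C * t) := by
  have hle : ∀ t ∈ Icc 0 T, ‖g t‖ ≤ M + C * ∫ s in (0:ℝ)..t, ‖g s‖ := by
    intro t ht
    rw [hgeq t ht]
    refine (norm_add_le _ _).trans (add_le_add (hF t ht) ?_)
    exact norm_integral_clm_apply_le ht.1 hC (fun s hs => hbound s t hs.1.le hs.2 ht.2)
      (fun s _ => le_rfl)
      ((hg.norm.mono (Icc_subset_Icc_right ht.2)).intervalIntegrable_of_Icc ht.1)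
  simpa using le_mul_exp_of_le_add_mul_integral hC hg.norm hle

theorem eqOn_of_volterra (hC : 0 ≤ C)
    (hk : ContinuousOn (fun q : ℝ × ℝ => k q.1 q.2) (Icc 0 T ×ˢ Icc 0 T))
    (hbound : ∀ s t : ℝ, 0 ≤ s → s ≤ t → t ≤ T → ‖k t s‖ ≤ C)
    {g₁ g₂ : ℝ → X} (hg₁ : ContinuousOn g₁ (Icc 0 T)) (hg₂ : ContinuousOn g₂ (Icc 0 T))
    (hg₁eq : ∀ t ∈ Icc (0:ℝ) T, g₁ t = F t + ∫ s in (0:ℝ)..t, k t s (g₁ s))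
    (hg₂eq : ∀ t ∈ Icc (0:ℝ) T, g₂ t = F t + ∫ s in (0:ℝ)..t, k t s (g₂ s)) :
    EqOn g₁ g₂ (Icc 0 T) := by
  have hdiff : ∀ t ∈ Icc (0:ℝ) T,
      (g₁ - g₂) t = 0 + ∫ s in (0:ℝ)..t, k t s ((g₁ - g₂) s) := by
    intro t ht
    simp only [Pi.sub_apply, map_sub, zero_add]
    rw [intervalIntegral.integral_sub (intervalIntegrable_volterraIntegrand hk hg₁ ht)
      (intervalIntegrable_volterraIntegrand hk hg₂ ht), hg₁eq t ht, hg₂eq t ht,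
      add_sub_add_left_eq_sub]
  intro t ht
  have h := norm_le_mul_exp_of_volterra hC hbound (M := 0) (by simp) (hg₁.sub hg₂) hdiff t ht
  rwa [zero_mul, norm_le_zero_iff, Pi.sub_apply, sub_eq_zero] at h

end Volterra

section VolterraMap

variable {X : Type*} [NormedAddCommGroup X] [NormedSpace ℝ X] {T C : ℝ}
  {k : ℝ → ℝ → X →L[ℝ] X} {F : ℝ → X}

noncomputable def volterraMap (hT : 0 ≤ T)
    (hk : ContinuousOn (fun q : ℝ × ℝ => k q.1 q.2) (Icc 0 T ×ˢ Icc 0 T))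
    (hF : ContinuousOn F (Icc 0 T)) (f : C(Icc 0 T, X)) : C(Icc 0 T, X) where
  toFun t := F t + ∫ s in (0:ℝ)..t, k t s (IccExtend hT f s)
  continuous_toFun :=
    (hF.add (continuousOn_volterraIntegral hk f.continuous.Icc_extend'.continuousOn)).domRestrict

variable (hT : 0 ≤ T) (hk : ContinuousOn (fun q : ℝ × ℝ => k q.1 q.2) (Icc 0 T ×ˢ Icc 0 T))
  (hF : ContinuousOn F (Icc 0 T))

theorem volterraMap_apply (f : C(Icc 0 T, X)) (t : Icc 0 T) :
    volterraMap hT hk hF f t = F t + ∫ s in (0:ℝ)..t, k t s (IccExtend hT f s) :=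
  rfl

theorem dist_iterate_volterraMap_apply_le (hC : 0 ≤ C)
    (hbound : ∀ s t : ℝ, 0 ≤ s → s ≤ t → t ≤ T → ‖k t s‖ ≤ C) (f₁ f₂ : C(Icc 0 T, X)) (n : ℕ)
    (t : Icc 0 T) :
    dist ((volterraMap hT hk hF)^[n] f₁ t) ((volterraMap hT hk hF)^[n] f₂ t) ≤
      (C * t) ^ n / n ! * dist f₁ f₂ := by
  induction n generalizing t with
  | zero => simpa using ContinuousMap.dist_apply_le_dist t
  | succ n ih =>
    have hext : ∀ f : C(Icc 0 T, X), ContinuousOn (IccExtend hT f) (Icc 0 T) :=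
      fun f => f.continuous.Icc_extend'.continuousOn
    rw [iterate_succ_apply', iterate_succ_apply', dist_eq_norm, volterraMap_apply,
      volterraMap_apply, add_sub_add_left_eq_sub,
      ← intervalIntegral.integral_sub (intervalIntegrable_volterraIntegrand hk (hext _) t.2)
        (intervalIntegrable_volterraIntegrand hk (hext _) t.2)]
    simp_rw [← map_sub]
    have hint : C * ∫ s in (0:ℝ)..t, (C * s) ^ n / n ! * dist f₁ f₂ =
        (C * t) ^ (n + 1) / (n + 1)! * dist f₁ f₂ := by
      simp_rw [mul_pow]
      rw [intervalIntegral.integral_mul_const, intervalIntegral.integral_div,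
        intervalIntegral.integral_const_mul, integral_pow, Nat.factorial_succ]
      push_cast
      field_simp
      ring
    refine (norm_integral_clm_apply_le t.2.1 hC (fun s hs => hbound s t hs.1.le hs.2 t.2.2)
      (fun s hs => ?_) (Continuous.intervalIntegrable (by fun_prop) _ _)).trans_eq hint
    have hs' : s ∈ Icc 0 T := ⟨hs.1.le, hs.2.trans t.2.2⟩
    rw [IccExtend_of_mem hT _ hs', IccExtend_of_mem hT _ hs', ← dist_eq_norm]
    exact ih ⟨s, hs'⟩

theorem dist_iterate_volterraMap_le (hC : 0 ≤ C)
    (hbound : ∀ s t : ℝ, 0 ≤ s → s ≤ t → t ≤ T → ‖k t s‖ ≤ C) (n : ℕ) (f₁ f₂ : C(Icc 0 T, X)) :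
    dist ((volterraMap hT hk hF)^[n] f₁) ((volterraMap hT hk hF)^[n] f₂) ≤
      (C * T) ^ n / n ! * dist f₁ f₂ := by
  refine (ContinuousMap.dist_le (by positivity)).2 fun t => ?_
  refine (dist_iterate_volterraMap_apply_le hT hk hF hC hbound f₁ f₂ n t).trans ?_
  gcongr
  · exact mul_nonneg hC t.2.1
  · exact t.2.2

end VolterraMap

theorem exists_volterra_solution {X : Type*} [NormedAddCommGroup X] [NormedSpace ℝ X]
    [CompleteSpace X] {T C : ℝ} {k : ℝ → ℝ → X →L[ℝ] X} {F : ℝ → X} (hT : 0 ≤ T)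
    (hk : ContinuousOn (fun q : ℝ × ℝ => k q.1 q.2) (Icc 0 T ×ˢ Icc 0 T))
    (hF : ContinuousOn F (Icc 0 T)) (hC : 0 ≤ C)
    (hbound : ∀ s t : ℝ, 0 ≤ s → s ≤ t → t ≤ T → ‖k t s‖ ≤ C) :
    ∃ g : ℝ → X, ContinuousOn g (Icc 0 T) ∧
      ∀ t ∈ Icc (0:ℝ) T, g t = F t + ∫ s in (0:ℝ)..t, k t s (g s) := by
  obtain ⟨f, hf⟩ := exists_isFixedPt_of_dist_iterate_le (C * T)
    (dist_iterate_volterraMap_le hT hk hF hC hbound)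
  refine ⟨IccExtend hT f, f.continuous.Icc_extend'.continuousOn, fun t ht => ?_⟩
  rw [IccExtend_of_mem hT f ht]
  exact (DFunLike.congr_fun hf ⟨t, ht⟩).symm

theorem volterra_equation_wellposed
    {X : Type*} [NormedAddCommGroup X] [NormedSpace ℝ X] [CompleteSpace X]
    (T C : ℝ) (hT : 0 < T) (hC : 0 ≤ C)
    (k : ℝ → ℝ → (X →L[ℝ] X))
    (hk : ContinuousOn (fun q : ℝ × ℝ => k q.1 q.2) (Set.Icc 0 T ×ˢ Set.Icc 0 T))
    (hbound : ∀ s t : ℝ, 0 ≤ s → s ≤ t → t ≤ T → ‖k t s‖ ≤ C)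
    (F : ℝ → X) (hF : ContinuousOn F (Set.Icc 0 T)) :
    ∃ g : ℝ → X,
      (ContinuousOn g (Set.Icc 0 T) ∧
        (∀ t ∈ Set.Icc (0:ℝ) T, g t = F t + ∫ s in (0:ℝ)..t, k t s (g s)) ∧
        (∀ t ∈ Set.Icc (0:ℝ) T,
          ‖g t‖ ≤ Real.exp (C * T) * ⨆ s : Set.Icc (0:ℝ) T, ‖F s‖)) ∧
      (∀ g' : ℝ → X, ContinuousOn g' (Set.Icc 0 T) →
        (∀ t ∈ Set.Icc (0:ℝ) T, g' t = F t + ∫ s in (0:ℝ)..t, k t s (g' s)) →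
        ∀ t ∈ Set.Icc (0:ℝ) T, g' t = g t) := by
  obtain ⟨g, hg, hgeq⟩ := exists_volterra_solution hT.le hk hF hC hbound
  have hFM : ∀ t ∈ Icc 0 T, ‖F t‖ ≤ ⨆ s : Icc (0:ℝ) T, ‖F s‖ := fun t ht =>
    le_ciSup (isCompact_range hF.norm.domRestrict).bddAbove ⟨t, ht⟩
  refine ⟨g, ⟨hg, hgeq, fun t ht => ?_⟩, fun g' hg' hg'eq =>
    eqOn_of_volterra hC hk hbound hg' hg hg'eq hgeq⟩
  have hM : 0 ≤ ⨆ s : Icc (0:ℝ) T, ‖F s‖ := (norm_nonneg _).trans (hFM t ht)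
  calc ‖g t‖ ≤ (⨆ s : Icc (0:ℝ) T, ‖F s‖) * Real.exp (C * t) :=
        norm_le_mul_exp_of_volterra hC hbound hFM hg hgeq t ht
    _ ≤ Real.exp (C * T) * ⨆ s : Icc (0:ℝ) T, ‖F s‖ := by
        rw [mul_comm]
        gcongr
        exact ht.2
end

section
/- Let M be a real symmetric 3×3 matrix with trace M = 0 and det M = 0. Then there exist M₀ ≥ 0 and unit vectors n, d ∈ ℝ³ with n · d = 0 such that M_{ij} = M₀ (n_i d_j + d_i n_j) for all i, j. -/
/-!
By the spectral theorem `M = ∑ λₖ bₖ bₖᵀ` for an orthonormal eigenbasis `b`. The eigenvalues sum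
to `tr M = 0` and multiply to `det M = 0`, so they are `M₀, -M₀, 0` with `M₀ ≥ 0`, and
`M = M₀ (u uᵀ - v vᵀ)` for orthonormal `u, v`. Rotating the pair by 45°, `n = (u + v)/√2` and
`d = (u - v)/√2` are again orthonormal and `n dᵀ + d nᵀ = u uᵀ - v vᵀ`.
-/

open scoped RealInnerProductSpace

open Matrix

theorem Matrix.IsHermitian.eq_sum_eigenvalues_smul_vecMulVec {𝕜 n : Type*} [RCLike 𝕜]
    [Fintype n] [DecidableEq n] {A : Matrix n n 𝕜} (hA : A.IsHermitian) :
    A = ∑ k, hA.eigenvalues k •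
      vecMulVec (hA.eigenvectorBasis k) (star (hA.eigenvectorBasis k)) := by
  conv_lhs => rw [hA.spectral_theorem, Unitary.conjStarAlgAut_apply]
  ext i j
  simp only [mul_apply, diagonal_apply, Function.comp_apply, star_apply, eigenvectorUnitary_apply,
    mul_ite, mul_zero, Finset.sum_ite_eq', Finset.mem_univ, if_true, sum_apply, smul_apply,
    vecMulVec_apply, Pi.star_apply, RCLike.real_smul_eq_coe_mul]
  exact Finset.sum_congr rfl fun k _ => by ring

theorem exists_eq_neg_of_sum_eq_zero_of_prod_eq_zero {μ : Fin 3 → ℝ} (hs : ∑ k, μ k = 0)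
    (hp : ∏ k, μ k = 0) :
    ∃ i j, i ≠ j ∧ 0 ≤ μ i ∧ μ j = -μ i ∧ ∀ k, k ≠ i → k ≠ j → μ k = 0 := by
  simp only [Fin.sum_univ_three, Fin.prod_univ_three, mul_eq_zero] at hs hp
  obtain ⟨i, j, hij, hji, hk⟩ :
      ∃ i j, i ≠ j ∧ μ j = -μ i ∧ ∀ k, k ≠ i → k ≠ j → μ k = 0 := by
    rcases hp with (h | h) | h
    · exact ⟨1, 2, by decide, by linarith, fun k => by fin_cases k <;> simp_all⟩
    · exact ⟨0, 2, by decide, by linarith, fun k => by fin_cases k <;> simp_all⟩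
    · exact ⟨0, 1, by decide, by linarith, fun k => by fin_cases k <;> simp_all⟩
  rcases le_total 0 (μ i) with h | h
  · exact ⟨i, j, hij, h, hji, hk⟩
  · exact ⟨j, i, hij.symm, by linarith, by linarith, fun k hki hkj => hk k hkj hki⟩

section Rotation

variable {E : Type*} [NormedAddCommGroup E] [InnerProductSpace ℝ E] {u v : E}

theorem orthonormal_sqrt_two_inv_smul_add_sub (hu : ‖u‖ = 1) (hv : ‖v‖ = 1) (huv : ⟪u, v⟫ = 0) :
    ‖(√2)⁻¹ • (u + v)‖ = 1 ∧ ‖(√2)⁻¹ • (u - v)‖ = 1 ∧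
      ⟪(√2)⁻¹ • (u + v), (√2)⁻¹ • (u - v)⟫ = 0 := by
  have hadd := norm_add_eq_sqrt_iff_real_inner_eq_zero.mpr huv
  have hsub := norm_sub_eq_sqrt_iff_real_inner_eq_zero.mpr huv
  rw [hu, hv, one_mul, one_add_one_eq_two] at hadd hsub
  refine ⟨?_, ?_, ?_⟩
  · rw [norm_smul, hadd, norm_inv, Real.norm_of_nonneg (by positivity),
      inv_mul_cancel₀ (by positivity)]
  · rw [norm_smul, hsub, norm_inv, Real.norm_of_nonneg (by positivity),
      inv_mul_cancel₀ (by positivity)]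
  · rw [inner_smul_left, inner_smul_right,
      (real_inner_add_sub_eq_zero_iff u v).mpr (hu.trans hv.symm), mul_zero, mul_zero]

end Rotation

theorem vecMulVec_sqrt_two_inv_smul_add_sub {ι : Type*} (u v : ι → ℝ) :
    vecMulVec ((√2)⁻¹ • (u + v)) ((√2)⁻¹ • (u - v)) +
      vecMulVec ((√2)⁻¹ • (u - v)) ((√2)⁻¹ • (u + v)) = vecMulVec u u - vecMulVec v v := by
  ext i j
  have h2 : (√2)⁻¹ * (√2)⁻¹ = (2 : ℝ)⁻¹ := by rw [← mul_inv, Real.mul_self_sqrt zero_le_two]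
  simp only [Matrix.add_apply, Matrix.sub_apply, vecMulVec_apply, Pi.smul_apply, Pi.add_apply,
    Pi.sub_apply, smul_eq_mul]
  linear_combination 2 * (u i * u j - v i * v j) * h2

theorem double_couple_representation
    (M : Matrix (Fin 3) (Fin 3) ℝ)
    (hsymm : M.IsSymm) (htrace : M.trace = 0) (hdet : M.det = 0) :
    ∃ M₀ : ℝ, 0 ≤ M₀ ∧
      ∃ n d : EuclideanSpace ℝ (Fin 3),
        ‖n‖ = 1 ∧ ‖d‖ = 1 ∧ ⟪n, d⟫ = 0 ∧
        ∀ i j, M i j = M₀ * (n i * d j + d i * n j) := by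
  have hM : M.IsHermitian := by rwa [IsHermitian, conjTranspose_eq_transpose_of_trivial]
  obtain ⟨i, j, hij, hi, hji, hzero⟩ := exists_eq_neg_of_sum_eq_zero_of_prod_eq_zero
    (by simpa [hM.trace_eq_sum_eigenvalues] using htrace)
    (by simpa [hM.det_eq_prod_eigenvalues] using hdet)
  set b := hM.eigenvectorBasis
  have hM_eq : M = hM.eigenvalues i • (vecMulVec (b i) (b i) - vecMulVec (b j) (b j)) := by
    conv_lhs => rw [hM.eq_sum_eigenvalues_smul_vecMulVec]
    rw [Fintype.sum_eq_add i j hij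
      fun k hk => by rw [hzero k hk.1 hk.2, zero_smul], hji, neg_smul, smul_sub]
    simp only [star_trivial]
    abel
  obtain ⟨hn, hd, hnd⟩ := orthonormal_sqrt_two_inv_smul_add_sub (b.orthonormal.1 i)
    (b.orthonormal.1 j) (b.orthonormal.2 hij)
  refine ⟨hM.eigenvalues i, hi, _, _, hn, hd, hnd, fun k l => ?_⟩
  rw [congrFun₂ hM_eq k l, ← vecMulVec_sqrt_two_inv_smul_add_sub]
  simp only [Matrix.smul_apply, Matrix.add_apply, vecMulVec_apply, smul_eq_mul, WithLp.ofLp_add,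
    WithLp.ofLp_sub, WithLp.ofLp_smul]
end
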